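/- Let M be a separable positive semidefinite matrix on ℂ^{d} ⊗ ℂ^{d} with trace 1, i.e., M = Σ_i p_i A_i ⊗ B_i with p_i ≥ 0, A_i, B_i positive semidefinite of trace 1, Σ_i p_i = 1. Then the trace norm of the partial transpose of M is at most 1: ‖M^Γ‖₁ ≤ 1. -/

import Mathlib

set_option maxHeartbeats 1000000
open Matrix Kronecker ComplexOrder

/-- The trace norm `Tr √(Xᴴ X)` of a square complex matrix. -/
noncomputable def traceNorm {n : Type*} [Fintype n] [DecidableEq n]
    (X : Matrix n n ℂ) : ℝ :=
  ((Matrix.posSemidef_conjTranspose_mul_self X).1.eigenvectorUnitary.1 *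
    diagonal (((↑) : ℝ → ℂ) ∘ (√·) ∘ (Matrix.posSemidef_conjTranspose_mul_self X).1.eigenvalues) *
    (star (Matrix.posSemidef_conjTranspose_mul_self X).1.eigenvectorUnitary : Matrix n n ℂ)).trace.re

lemma kronecker_conjTranspose {m n : Type*} [Fintype m] [Fintype n]
    (C : Matrix m m ℂ) (D : Matrix n n ℂ) :
    (C ⊗ₖ D)ᴴ = Cᴴ ⊗ₖ Dᴴ := by
  ext ⟨a, b⟩ ⟨c, e⟩
  simp [conjTranspose_apply, kroneckerMap_apply, mul_comm]

lemma posSemidef_kronecker {m n : Type*} [Fintype m] [Fintype n]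
    [DecidableEq m] [DecidableEq n]
    {C : Matrix m m ℂ} {D : Matrix n n ℂ}
    (hC : C.PosSemidef) (hD : D.PosSemidef) : (C ⊗ₖ D).PosSemidef := by
  exact hC.kronecker hD

lemma posSemidef_smul {n : Type*} [Fintype n]
    {N : Matrix n n ℂ} (hN : N.PosSemidef) {c : ℝ} (hc : 0 ≤ c) :
    ((c : ℂ) • N).PosSemidef := by
  constructor
  · unfold Matrix.IsHermitian
    rw [conjTranspose_smul, hN.1]
    congr 1
    simp
  · intro x
    have := hN.2 x
    exact (hN.smul (a := (c : ℂ)) (by exact_mod_cast hc)).2 x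

lemma traceNorm_of_posSemidef {n : Type*} [Fintype n] [DecidableEq n]
    {X : Matrix n n ℂ} (hX : X.PosSemidef) : traceNorm X = X.trace.re := by
  have hXX := Matrix.posSemidef_conjTranspose_mul_self X
  have h1 : traceNorm X = (cfc Real.sqrt (Xᴴ * X)).trace.re := by
    rw [hXX.1.cfc_eq]; rfl
  have hsa : IsSelfAdjoint X := hX.1
  have h : cfc Real.sqrt (Xᴴ * X) = X := by
    rw [hX.1, ← pow_two, ← cfc_pow_id (R := ℝ) X 2, ← cfc_comp Real.sqrt (fun x : ℝ => x ^ 2) X]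
    conv_rhs => rw [← cfc_id ℝ X]
    apply cfc_congr
    intro x hx
    rw [hX.1.spectrum_real_eq_range_eigenvalues] at hx
    obtain ⟨i, rfl⟩ := hx
    simp [Real.sqrt_sq (hX.eigenvalues_nonneg i)]
  rw [h1, h]

/-- PPT criterion: the partial transpose of a separable state has trace norm
at most 1. -/
theorem traceNorm_partialTranspose_le_one_of_separable
    (d : ℕ) (ι : Type) [Fintype ι]
    (p : ι → ℝ)
    (A : ι → Matrix (Fin d) (Fin d) ℂ)
    (B : ι → Matrix (Fin d) (Fin d) ℂ)
    (hp : ∀ i, 0 ≤ p i) (hpsum : ∑ i, p i = 1)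
    (hA : ∀ i, (A i).PosSemidef) (hAtr : ∀ i, (A i).trace = 1)
    (hB : ∀ i, (B i).PosSemidef) (hBtr : ∀ i, (B i).trace = 1)
    (M : Matrix (Fin d × Fin d) (Fin d × Fin d) ℂ)
    (hM : M = ∑ i, (p i : ℂ) • (A i ⊗ₖ B i)) :
    traceNorm (Matrix.of fun kl k'l' : Fin d × Fin d =>
        M (kl.1, k'l'.2) (k'l'.1, kl.2)) ≤ 1 := by
  set X : Matrix (Fin d × Fin d) (Fin d × Fin d) ℂ :=
    Matrix.of fun kl k'l' : Fin d × Fin d => M (kl.1, k'l'.2) (k'l'.1, kl.2) with hXdef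
  have hXeq : X = ∑ i, (p i : ℂ) • (A i ⊗ₖ (B i)ᵀ) := by
    ext ⟨k, l⟩ ⟨k', l'⟩
    simp only [hXdef, Matrix.of_apply, hM, Matrix.sum_apply, Matrix.smul_apply,
      kroneckerMap_apply, Matrix.transpose_apply, smul_eq_mul]
  have hX : X.PosSemidef := by
    rw [hXeq]
    apply Finset.sum_induction _ Matrix.PosSemidef
      (fun _ _ ha hb => ha.add hb) Matrix.PosSemidef.zero
    intro i _
    exact posSemidef_smul (posSemidef_kronecker (hA i) ((hB i).transpose)) (hp i)
  have htr : X.trace = 1 := by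
    rw [hXeq, Matrix.trace_sum]
    have : ∀ i ∈ Finset.univ, ((p i : ℂ) • (A i ⊗ₖ (B i)ᵀ)).trace = (p i : ℂ) := by
      intro i _
      rw [Matrix.trace_smul, Matrix.trace_kronecker, Matrix.trace_transpose,
        hAtr i, hBtr i]
      simp
    rw [Finset.sum_congr rfl this, ← Complex.ofReal_sum, hpsum, Complex.ofReal_one]
  rw [traceNorm_of_posSemidef hX, htr]
  simp
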